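/- arXiv:2308.02754 — 2 statements merged into one kernel-verified Lean document; each statement's English description precedes it below -/
import Mathlib

section
/- Let G be a graph on n vertices with minimum degree at least r, and suppose G admits an r-dynamic proper k-coloring. Then G has an independent dominating set of size at most (k - r)·n / k. -/
open Finset

variable {V : Type} [Fintype V] [DecidableEq V]

/-- A set of vertices is dominating if every vertex is in it or adjacent to one of its members. -/
def Dominating (G : SimpleGraph V) (S : Finset V) : Prop :=
  ∀ v : V, v ∈ S ∨ ∃ u ∈ S, G.Adj u v

/-- A set of vertices is independent if no two of its members are adjacent. -/
def IndepSet (G : SimpleGraph V) (S : Finset V) : Prop :=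
  ∀ u ∈ S, ∀ v ∈ S, ¬ G.Adj u v

/-- A graph is 2-connected if it has at least 3 vertices and deleting any vertex leaves
a connected graph. -/
def TwoConnected (G : SimpleGraph V) : Prop :=
  3 ≤ Fintype.card V ∧ ∀ v : V, (G.induce {w : V | w ≠ v}).Connected

/-- Combinatorial data of a plane embedding of `G`: a finite set of faces, each face having a
boundary of at least three vertices, a distinguished outer face, satisfying the handshake
identity for face boundaries and Euler's formula (when the graph is connected). -/
structure PlaneStructure (G : SimpleGraph V) [DecidableRel G.Adj] where
  F : Type
  [fintypeF : Fintype F]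
  [decEqF : DecidableEq F]
  boundary : F → Finset V
  outer : F
  three_le_boundary : ∀ f : F, 3 ≤ (boundary f).card
  handshake : ∑ f : F, (boundary f).card = 2 * G.edgeFinset.card
  euler : G.Connected → Fintype.card V + Fintype.card F = G.edgeFinset.card + 2

attribute [instance] PlaneStructure.fintypeF PlaneStructure.decEqF

variable {G : SimpleGraph V} [DecidableRel G.Adj]

/-- The number of faces of degree `i`, i.e. with exactly `i` vertices on their boundary. -/
def PlaneStructure.fcount (P : PlaneStructure G) (i : ℕ) : ℕ :=
  (Finset.univ.filter fun f : P.F => (P.boundary f).card = i).card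

/-- A near triangulation: a 2-connected plane graph in which every face except
possibly the outer face is bounded by a triangle. -/
def PlaneStructure.IsNearTriangulation (P : PlaneStructure G) : Prop :=
  TwoConnected G ∧ ∀ f : P.F, f ≠ P.outer → (P.boundary f).card = 3

/-- A planar triangulation: a plane graph in which every face is bounded by a triangle. -/
def PlaneStructure.IsTriangulation (P : PlaneStructure G) : Prop :=
  TwoConnected G ∧ ∀ f : P.F, (P.boundary f).card = 3

/-- **Goddard--Henning.** If a graph `G` on `n` vertices with minimum degree at
least `r` admits an `r`-dynamic proper `k`-coloring, then `G` has an independent dominating set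
of size at most `(k - r)·n/k`. -/
theorem stmt2 {V : Type} [Fintype V] [DecidableEq V] (G : SimpleGraph V) [DecidableRel G.Adj]
    (r k : ℕ) (hk : 0 < k) (c : V → Fin k)
    (hproper : ∀ u v : V, G.Adj u v → c u ≠ c v)
    (hmindeg : ∀ v : V, r ≤ G.degree v)
    (hdynamic : ∀ v : V, min r (G.degree v) ≤ ((G.neighborFinset v).image c).card) :
    ∃ S : Finset V, IndepSet G S ∧ Dominating G S ∧
      (S.card : ℚ) ≤ ((k : ℚ) - r) * Fintype.card V / k := by

  classical
  by_cases hV : IsEmpty V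
  · refine ⟨∅, ?_, ?_, ?_⟩
    · intro u hu; simp at hu
    · intro v; exact (hV.false v).elim
    · simp [Fintype.card_eq_zero]
  rw [not_isEmpty_iff] at hV
  obtain ⟨v0⟩ := hV
  have himg : ∀ v : V, r ≤ ((G.neighborFinset v).image c).card := by
    intro v
    have h1 := hdynamic v
    rwa [min_eq_left (hmindeg v)] at h1
  have hrk : r ≤ k := by
    calc r ≤ ((G.neighborFinset v0).image c).card := himg v0
      _ ≤ (univ : Finset (Fin k)).card := Finset.card_le_univ _
      _ = k := by simp
  set n := Fintype.card V with hn
  set Q : Fin k → V → Prop := fun i v => c v = i ∨ ∀ u ∈ G.neighborFinset v, c u ≠ i with hQ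
  have key : ∀ v : V, (univ.filter fun i => Q i v).card ≤ k - r := by
    intro v
    have hsub : (univ.filter fun i => Q i v) ⊆ ((G.neighborFinset v).image c)ᶜ := by
      intro i hi
      simp only [hQ, mem_filter, mem_univ, true_and] at hi
      rw [Finset.mem_compl, Finset.mem_image]
      rintro ⟨u, hu, hcu⟩
      rcases hi with h | h
      · exact hproper v u ((G.mem_neighborFinset v u).mp hu) (h.trans hcu.symm)
      · exact h u hu hcu
    calc (univ.filter fun i => Q i v).card
        ≤ (((G.neighborFinset v).image c)ᶜ).card := Finset.card_le_card hsub
      _ = k - ((G.neighborFinset v).image c).card := by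
          rw [Finset.card_compl]; simp
      _ ≤ k - r := Nat.sub_le_sub_left (himg v) k
  have hsum : ∑ i : Fin k, (univ.filter (fun v => Q i v)).card ≤ n * (k - r) := by
    have hswap : ∑ i : Fin k, (univ.filter (fun v => Q i v)).card
        = ∑ v : V, (univ.filter fun i => Q i v).card := by
      simp only [Finset.card_filter]
      exact Finset.sum_comm
    rw [hswap]
    calc ∑ v : V, (univ.filter fun i => Q i v).card
        ≤ ∑ _v : V, (k - r) := Finset.sum_le_sum fun v _ => key v
      _ = n * (k - r) := by simp [Finset.sum_const, hn, Finset.card_univ]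
  have hkne : (univ : Finset (Fin k)).Nonempty := ⟨⟨0, hk⟩, mem_univ _⟩
  obtain ⟨i0, -, hmin⟩ := Finset.exists_min_image univ
    (fun i => (univ.filter (fun v => Q i v)).card) hkne
  have hpig : k * (univ.filter (fun v => Q i0 v)).card ≤ n * (k - r) := by
    calc k * (univ.filter (fun v => Q i0 v)).card
        = ∑ _i : Fin k, (univ.filter (fun v => Q i0 v)).card := by
          simp [Finset.sum_const, mul_comm]
      _ ≤ ∑ i : Fin k, (univ.filter (fun v => Q i v)).card :=
          Finset.sum_le_sum fun i _ => hmin i (mem_univ i)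
      _ ≤ n * (k - r) := hsum
  set C : Finset V := univ.filter (fun v => c v = i0) with hC
  set U : Finset V := univ.filter
    (fun v => c v ≠ i0 ∧ ∀ u ∈ G.neighborFinset v, c u ≠ i0) with hU
  have hCU : univ.filter (fun v => Q i0 v) = C ∪ U := by
    ext v
    simp only [hQ, hC, hU, mem_filter, mem_univ, true_and, Finset.mem_union]
    tauto
  have hdisj : Disjoint C U := by
    rw [Finset.disjoint_left]
    intro v hv hv'
    simp only [hC, mem_filter, mem_univ, true_and] at hv
    simp only [hU, mem_filter, mem_univ, true_and] at hv'
    exact hv'.1 hv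
  -- maximal independent subset of U
  set T : Finset (Finset V) := U.powerset.filter
    (fun s => ∀ u ∈ s, ∀ w ∈ s, ¬ G.Adj u w) with hT
  have hTne : T.Nonempty := by
    refine ⟨∅, ?_⟩
    simp [hT]
  obtain ⟨M, hMT, hMmax⟩ := Finset.exists_max_image T Finset.card hTne
  simp only [hT, mem_filter, Finset.mem_powerset] at hMT
  obtain ⟨hMU, hMind⟩ := hMT
  refine ⟨C ∪ M, ?_, ?_, ?_⟩
  · -- independence
    intro u hu w hw hadj
    rcases Finset.mem_union.mp hu with hu | hu <;>
      rcases Finset.mem_union.mp hw with hw | hw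
    · simp only [hC, mem_filter, mem_univ, true_and] at hu hw
      exact hproper u w hadj (hu.trans hw.symm)
    · have hwU := hMU hw
      simp only [hC, mem_filter, mem_univ, true_and] at hu
      simp only [hU, mem_filter, mem_univ, true_and] at hwU
      exact hwU.2 u ((G.mem_neighborFinset w u).mpr hadj.symm) hu
    · have huU := hMU hu
      simp only [hC, mem_filter, mem_univ, true_and] at hw
      simp only [hU, mem_filter, mem_univ, true_and] at huU
      exact huU.2 w ((G.mem_neighborFinset u w).mpr hadj) hw
    · exact hMind u hu w hw hadj
  · -- dominating
    intro v
    by_cases hvC : c v = i0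
    · exact Or.inl (Finset.mem_union_left _ (by simp [hC, hvC]))
    by_cases hvN : ∀ u ∈ G.neighborFinset v, c u ≠ i0
    · -- v ∈ U
      have hvU : v ∈ U := by
        rw [hU, Finset.mem_filter]
        exact ⟨mem_univ _, hvC, hvN⟩
      by_cases hvM : v ∈ M
      · exact Or.inl (Finset.mem_union_right _ hvM)
      · right
        have hins : insert v M ∉ T := by
          intro hmem
          have := hMmax _ hmem
          rw [Finset.card_insert_of_notMem hvM] at this
          omega
        have hinsU : insert v M ⊆ U := Finset.insert_subset hvU hMU
        have hnind : ¬ ∀ u ∈ insert v M, ∀ w ∈ insert v M, ¬ G.Adj u w := by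
          intro h
          exact hins (by simp only [hT, mem_filter, Finset.mem_powerset]; exact ⟨hinsU, h⟩)
        push_neg at hnind
        obtain ⟨u, hu, w, hw, hadj⟩ := hnind
        rcases Finset.mem_insert.mp hu with hu' | hu' <;>
          rcases Finset.mem_insert.mp hw with hw' | hw'
        · rw [hu', hw'] at hadj; exact absurd hadj (G.irrefl)
        · rw [hu'] at hadj
          exact ⟨w, Finset.mem_union_right _ hw', hadj.symm⟩
        · rw [hw'] at hadj
          exact ⟨u, Finset.mem_union_right _ hu', hadj⟩
        · exact absurd hadj (hMind u hu' w hw')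
    · -- v dominated by C
      push_neg at hvN
      obtain ⟨u, hu, hcu⟩ := hvN
      right
      refine ⟨u, Finset.mem_union_left _ (by simp [hC, hcu]), ?_⟩
      exact ((G.mem_neighborFinset v u).mp hu).symm
  · -- cardinality
    have hcard : k * (C ∪ M).card ≤ n * (k - r) := by
      have h1 : (C ∪ M).card ≤ (univ.filter (fun v => Q i0 v)).card := by
        rw [hCU]
        refine Finset.card_le_card ?_
        exact Finset.union_subset_union_right hMU
      calc k * (C ∪ M).card ≤ k * (univ.filter (fun v => Q i0 v)).card :=
            Nat.mul_le_mul_left k h1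
        _ ≤ n * (k - r) := hpig
    have hkQ : (0 : ℚ) < k := by exact_mod_cast hk
    rw [le_div_iff₀ hkQ]
    have : ((k : ℚ) * (C ∪ M).card) ≤ (n : ℚ) * ((k : ℚ) - r) := by
      have := hcard
      have hcast : ((n * (k - r) : ℕ) : ℚ) = (n : ℚ) * ((k : ℚ) - r) := by
        push_cast [Nat.cast_sub hrk]
        ring
      calc ((k : ℚ) * (C ∪ M).card) = ((k * (C ∪ M).card : ℕ) : ℚ) := by push_cast; ring
        _ ≤ ((n * (k - r) : ℕ) : ℚ) := by exact_mod_cast hcard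
        _ = (n : ℚ) * ((k : ℚ) - r) := hcast
    linarith
end

section
/- Every recursive Eulerian triangulation G admits a 5-dynamic proper 6-coloring with the property that any two adjacent degree-4 vertices u, v have distinct missing color sets, i.e., the set of colors not appearing on the closed neighborhood of u differs from that of v. In particular χ_5(G) ≤ 6. -/
/-!
Induction along the construction, for a stronger invariant: the coloring is proper, all degrees
are even, the closed neighbourhood of each vertex `v` carries at least `min 6 (deg v + 1)` colors,
and adjacent degree-4 vertices have different color sets on their closed neighbourhoods.

When the octahedron with antipodal pairs `a x`, `b y`, `c z` is inserted into the face `abc`, the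
old colors are kept and `x, y, z` receive the three colors missing on `abc`, so the six octahedron
vertices carry all six colors. Each of them then sees every color except possibly that of its
antipode, and misses exactly that one when its new degree is 4; as the antipode map is injective,
adjacent new degree-4 vertices miss different colors. The order of the colors on `x, y, z` is
chosen so that the antipode of a face vertex of old degree 4 gets a color that vertex already
sees, so that it sees all six colors afterwards; such an order exists because the missing colors
of the degree-4 vertices among `a, b, c` are pairwise distinct. Face vertices of degree at least
6 already see all colors, and all other vertices keep their neighbourhoods and colors.
-/

open Finset

/-- The graph on `ℕ` whose edges are the pairs of distinct vertices lying on a common face;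
for a triangulation, the set of (triangular) faces determines the graph. -/
def facesGraph (faces : Finset (Finset ℕ)) : SimpleGraph ℕ where
  Adj u v := u ≠ v ∧ ∃ t ∈ faces, u ∈ t ∧ v ∈ t
  symm := ⟨by
    rintro u v ⟨huv, t, ht, hu, hv⟩
    exact ⟨huv.symm, t, ht, hv, hu⟩⟩
  loopless := ⟨fun v h => h.1 rfl⟩

instance (faces : Finset (Finset ℕ)) : DecidableRel (facesGraph faces).Adj :=
  fun u v => inferInstanceAs (Decidable (u ≠ v ∧ ∃ t ∈ faces, u ∈ t ∧ v ∈ t))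

/-- The vertex set of the triangulation given by its set of faces. -/
def rVerts (faces : Finset (Finset ℕ)) : Finset ℕ := faces.sup id

/-- The neighborhood of a vertex in the triangulation given by its set of faces. -/
def rNbr (faces : Finset (Finset ℕ)) (v : ℕ) : Finset ℕ :=
  (rVerts faces).filter fun w => (facesGraph faces).Adj v w

/-- The degree of a vertex in the triangulation given by its set of faces. -/
def rDeg (faces : Finset (Finset ℕ)) (v : ℕ) : ℕ := (rNbr faces v).card

/-- Recursive Eulerian triangulations, encoded by their sets of (triangular) faces:
a triangle is one; and from a recursive Eulerian triangulation one obtains another by selecting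
a face `{a, b, c}`, drawing a new triangle `{x, y, z}` inside it, and joining both ends of each
edge of the new triangle with a different vertex of the selected face, so that the selected face
together with the new triangle induces an octahedron (with `a, x`, `b, y` and `c, z` the three
non-adjacent pairs); the selected face is replaced by the seven new faces thus created. -/
inductive RecEulerian : Finset (Finset ℕ) → Prop
  | base (a b c : ℕ) (hab : a ≠ b) (hac : a ≠ c) (hbc : b ≠ c) :
      RecEulerian {{a, b, c}}
  | step (faces : Finset (Finset ℕ)) (a b c x y z : ℕ)
      (hrec : RecEulerian faces) (hface : ({a, b, c} : Finset ℕ) ∈ faces)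
      (hnodup : ([a, b, c, x, y, z] : List ℕ).Nodup)
      (hx : x ∉ rVerts faces) (hy : y ∉ rVerts faces) (hz : z ∉ rVerts faces) :
      RecEulerian ((faces.erase {a, b, c}) ∪
        {{a, b, z}, {a, y, c}, {a, y, z}, {x, b, c}, {x, b, z}, {x, y, c}, {x, y, z}})

section Faces

variable {F N : Finset (Finset ℕ)} {T : Finset ℕ} {v w : ℕ}

lemma mem_rVerts : v ∈ rVerts F ↔ ∃ t ∈ F, v ∈ t := by
  simp [rVerts, mem_sup]

lemma mem_rNbr : w ∈ rNbr F v ↔ (facesGraph F).Adj v w := by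
  refine ⟨fun h => (mem_filter.mp h).2, fun h => mem_filter.mpr ⟨?_, h⟩⟩
  obtain ⟨-, t, ht, -, hw⟩ := h
  exact mem_rVerts.mpr ⟨t, ht, hw⟩

lemma rNbr_subset_rVerts : rNbr F v ⊆ rVerts F := filter_subset _ _

lemma rNbr_eq_empty_of_notMem (hv : v ∉ rVerts F) : rNbr F v = ∅ := by
  refine eq_empty_of_forall_notMem fun w hw => hv ?_
  obtain ⟨-, t, ht, hvt, -⟩ := mem_rNbr.mp hw
  exact mem_rVerts.mpr ⟨t, ht, hvt⟩

lemma rVerts_erase_union_subset : rVerts (F.erase T ∪ N) ⊆ rVerts F ∪ rVerts N := by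
  rw [rVerts, rVerts, rVerts, sup_union]
  exact union_subset_union (sup_mono (erase_subset _ _)) subset_rfl

lemma adj_erase_union (hT : T ∈ F)
    (hcov : ∀ u ∈ T, ∀ v ∈ T, u ≠ v → (facesGraph N).Adj u v) {u : ℕ} :
    (facesGraph (F.erase T ∪ N)).Adj u v ↔
      (facesGraph F).Adj u v ∨ (facesGraph N).Adj u v := by
  constructor
  · rintro ⟨huv, t, ht, hu, hv⟩
    rcases mem_union.mp ht with ht | ht
    · exact Or.inl ⟨huv, t, mem_of_mem_erase ht, hu, hv⟩
    · exact Or.inr ⟨huv, t, ht, hu, hv⟩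
  · rintro (⟨huv, t, ht, hu, hv⟩ | ⟨huv, t, ht, hu, hv⟩)
    · by_cases htT : t = T
      · subst htT
        obtain ⟨-, s, hs, hus, hvs⟩ := hcov u hu v hv huv
        exact ⟨huv, s, mem_union_right _ hs, hus, hvs⟩
      · exact ⟨huv, t, mem_union_left _ (mem_erase.mpr ⟨htT, ht⟩), hu, hv⟩
    · exact ⟨huv, t, mem_union_right _ ht, hu, hv⟩

lemma rNbr_erase_union (hT : T ∈ F)
    (hcov : ∀ u ∈ T, ∀ v ∈ T, u ≠ v → (facesGraph N).Adj u v) :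
    rNbr (F.erase T ∪ N) v = rNbr F v ∪ rNbr N v := by
  ext w
  simp only [mem_union, mem_rNbr, adj_erase_union hT hcov]

end Faces

section Colors

variable {α : Type*} [DecidableEq α] {F G : Finset (Finset ℕ)} {col col' : ℕ → α} {v : ℕ}

def closedNbrColors (F : Finset (Finset ℕ)) (col : ℕ → α) (v : ℕ) : Finset α :=
  (insert v (rNbr F v)).image col

lemma card_closedNbrColors_le : (closedNbrColors F col v).card ≤ rDeg F v + 1 :=
  card_image_le.trans (card_insert_le _ _)

lemma closedNbrColors_subset (hN : rNbr F v ⊆ rNbr G v)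
    (hcol : ∀ w ∈ insert v (rNbr F v), col' w = col w) :
    closedNbrColors F col v ⊆ closedNbrColors G col' v := by
  rw [closedNbrColors, ← image_congr hcol]
  exact image_subset_image (insert_subset_insert v hN)

lemma closedNbrColors_congr (hN : rNbr G v = rNbr F v)
    (hcol : ∀ w ∈ insert v (rNbr F v), col' w = col w) :
    closedNbrColors G col' v = closedNbrColors F col v := by
  rw [closedNbrColors, closedNbrColors, hN]
  exact image_congr hcol

lemma filter_notMem_closedNbrColors [Fintype α] :
    (univ.filter fun i => col v ≠ i ∧ ∀ w ∈ rNbr F v, col w ≠ i) =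
      (closedNbrColors F col v)ᶜ := by
  ext i
  simp [closedNbrColors, eq_comm]

lemma erase_subset_closedNbrColors [Fintype α] {S : Finset ℕ} {o : ℕ} (hS : S.image col = univ)
    (hsub : S.erase o ⊆ insert v (rNbr F v)) :
    univ.erase (col o) ⊆ closedNbrColors F col v := by
  intro i hi
  obtain ⟨w, hw, rfl⟩ := mem_image.mp (hS ▸ mem_univ i)
  have hwo : w ≠ o := fun h => (mem_erase.mp hi).1 (h ▸ rfl)
  exact mem_image_of_mem col (hsub (mem_erase.mpr ⟨hwo, hw⟩))

end Colors

lemma eq_erase_of_erase_subset {α : Type*} [Fintype α] [DecidableEq α] {s : Finset α} {i : α}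
    (h : univ.erase i ⊆ s) (hcard : s.card + 1 ≤ Fintype.card α) : s = univ.erase i := by
  refine (eq_of_subset_of_card_le h ?_).symm
  rw [card_erase_of_mem (mem_univ i), card_univ]
  omega

lemma eq_univ_of_erase_subset {α : Type*} [Fintype α] [DecidableEq α] {s : Finset α} {i : α}
    (h : univ.erase i ⊆ s) (hi : i ∈ s) : s = univ := by
  refine eq_univ_of_forall fun j => ?_
  rcases eq_or_ne j i with rfl | hj
  exacts [hi, h (mem_erase.mpr ⟨hj, mem_univ j⟩)]

lemma disjoint_of_card_le_one {α : Type*} {s t : Finset α} (hs : s.card ≤ 1) (ht : t.card ≤ 1)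
    (hst : s ≠ t) : Disjoint s t := by
  refine disjoint_left.mpr fun i his hit => hst ?_
  rw [eq_singleton_iff_unique_mem.mpr ⟨his, fun j hj => card_le_one.mp hs j hj i his⟩,
    eq_singleton_iff_unique_mem.mpr ⟨hit, fun j hj => card_le_one.mp ht j hj i hit⟩]

lemma exists_eq_triple_avoiding {α : Type*} [DecidableEq α] {s A B C : Finset α}
    (hs : s.card = 3) (hAB : Disjoint A B) (hAC : Disjoint A C) (hBC : Disjoint B C)
    (hA : A.card ≤ 1) (hB : B.card ≤ 1) (hC : C.card ≤ 1) :
    ∃ p q r, {p, q, r} = s ∧ p ∉ A ∧ q ∉ B ∧ r ∉ C := by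
  obtain ⟨u, v, w, huv, huw, hvw, rfl⟩ := card_eq_three.mp hs
  rw [card_le_one] at hA hB hC
  rw [disjoint_left] at hAB hAC hBC
  by_cases huA : u ∈ A
  · by_cases hwC : w ∈ C
    · refine ⟨v, w, u, ?_, ?_, ?_, ?_⟩ <;> grind
    · refine ⟨v, u, w, ?_, ?_, ?_, ?_⟩ <;> grind
  · by_cases h : v ∈ B ∨ w ∈ C
    · refine ⟨u, w, v, ?_, ?_, ?_, ?_⟩ <;> grind
    · exact ⟨u, v, w, rfl, huA, not_or.mp h⟩

structure IsGoodColoring (F : Finset (Finset ℕ)) (col : ℕ → Fin 6) : Prop where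
  proper : ∀ u v, (facesGraph F).Adj u v → col u ≠ col v
  even_rDeg : ∀ v ∈ rVerts F, Even (rDeg F v)
  card_closedNbrColors : ∀ v ∈ rVerts F, min 6 (rDeg F v + 1) ≤ (closedNbrColors F col v).card
  closedNbrColors_ne : ∀ u v, rDeg F u = 4 → rDeg F v = 4 → (facesGraph F).Adj u v →
    closedNbrColors F col u ≠ closedNbrColors F col v

namespace IsGoodColoring

variable {F : Finset (Finset ℕ)} {col : ℕ → Fin 6} {u v : ℕ}

lemma closedNbrColors_eq_univ (hg : IsGoodColoring F col) (hv : v ∈ rVerts F)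
    (h5 : 5 ≤ rDeg F v) : closedNbrColors F col v = univ := by
  refine eq_univ_of_card _ (le_antisymm (card_le_univ _) ?_)
  have := hg.card_closedNbrColors v hv
  simp only [Fintype.card_fin]
  omega

lemma card_compl_closedNbrColors_le_one (hg : IsGoodColoring F col) (hv : v ∈ rVerts F)
    (h4 : rDeg F v = 4) : (closedNbrColors F col v)ᶜ.card ≤ 1 := by
  have := hg.card_closedNbrColors v hv
  rw [card_compl, Fintype.card_fin]
  omega

lemma disjoint_compl_closedNbrColors (hg : IsGoodColoring F col) (hadj : (facesGraph F).Adj u v)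
    (hu : rDeg F u = 4) (hv : rDeg F v = 4) :
    Disjoint (closedNbrColors F col u)ᶜ (closedNbrColors F col v)ᶜ := by
  obtain ⟨-, t, ht, hut, hvt⟩ := id hadj
  exact disjoint_of_card_le_one
    (hg.card_compl_closedNbrColors_le_one (mem_rVerts.mpr ⟨t, ht, hut⟩) hu)
    (hg.card_compl_closedNbrColors_le_one (mem_rVerts.mpr ⟨t, ht, hvt⟩) hv)
    (compl_inj_iff.not.mpr (hg.closedNbrColors_ne u v hu hv hadj))

end IsGoodColoring

lemma adj_singleton {T : Finset ℕ} {u v : ℕ} :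
    (facesGraph {T}).Adj u v ↔ u ≠ v ∧ u ∈ T ∧ v ∈ T := by
  simp [facesGraph]

lemma rNbr_singleton {T : Finset ℕ} {v : ℕ} (hv : v ∈ T) : rNbr {T} v = T.erase v := by
  ext w
  rw [mem_rNbr, adj_singleton, mem_erase]
  tauto

lemma isGoodColoring_triangle {a b c : ℕ} (hab : a ≠ b) (hac : a ≠ c) (hbc : b ≠ c) :
    IsGoodColoring {{a, b, c}} fun n => if n = a then 0 else if n = b then 1 else 2 := by
  have hV : rVerts {{a, b, c}} = {a, b, c} := by simp [rVerts]
  have hdeg : ∀ v ∈ ({a, b, c} : Finset ℕ), rDeg {{a, b, c}} v = 2 := by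
    intro v hv
    rw [rDeg, rNbr_singleton hv, card_erase_of_mem hv]
    grind
  refine ⟨?_, ?_, ?_, ?_⟩
  · intro u v huv
    rw [adj_singleton] at huv
    simp only [mem_insert, mem_singleton] at huv
    grind
  · exact fun v hv => hdeg v (hV ▸ hv) ▸ even_two
  · intro v hv
    rw [hV] at hv
    rw [hdeg v hv, closedNbrColors, rNbr_singleton hv, insert_erase hv]
    simp [Ne.symm hab, Ne.symm hac, Ne.symm hbc]
  · intro u v hu _ hadj
    have := hdeg u (adj_singleton.mp hadj).2.1
    omega

def octFaces (a b c x y z : ℕ) : Finset (Finset ℕ) :=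
  {{a, b, z}, {a, y, c}, {a, y, z}, {x, b, c}, {x, b, z}, {x, y, c}, {x, y, z}}

def octVerts (a b c x y z : ℕ) : Finset ℕ := {a, b, c, x, y, z}

def octAntipode (a b c x y z v : ℕ) : ℕ :=
  if v = a then x else if v = b then y else if v = c then z
  else if v = x then a else if v = y then b else c

def insertOctahedron (F : Finset (Finset ℕ)) (a b c x y z : ℕ) : Finset (Finset ℕ) :=
  F.erase {a, b, c} ∪ octFaces a b c x y z

structure CanInsertOctahedron (F : Finset (Finset ℕ)) (a b c x y z : ℕ) : Prop where
  face_mem : {a, b, c} ∈ F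
  nodup : [a, b, c, x, y, z].Nodup
  disjoint : Disjoint {x, y, z} (rVerts F)

section Octahedron

variable {F : Finset (Finset ℕ)} {a b c x y z v : ℕ}

local notation "V₆" => octVerts a b c x y z
local notation "opp" => octAntipode a b c x y z
local notation "F₊" => insertOctahedron F a b c x y z

lemma mem_octVerts : v ∈ V₆ ↔ v = a ∨ v = b ∨ v = c ∨ v = x ∨ v = y ∨ v = z := by
  simp [octVerts]

lemma mem_octVerts_iff_or :
    v ∈ V₆ ↔ v ∈ ({a, b, c} : Finset ℕ) ∨ v ∈ ({x, y, z} : Finset ℕ) := by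
  simp only [mem_octVerts, mem_insert, mem_singleton]
  tauto

lemma card_octVerts (h : [a, b, c, x, y, z].Nodup) : #V₆ = 6 := by
  simpa [octVerts] using List.toFinset_card_of_nodup h

lemma octAntipode_mem_of_mem_face (hv : v ∈ ({a, b, c} : Finset ℕ)) :
    opp v ∈ ({x, y, z} : Finset ℕ) := by
  simp only [octAntipode, mem_insert, mem_singleton] at hv ⊢
  grind

lemma octAntipode_mem_erase (h : [a, b, c, x, y, z].Nodup) (hv : v ∈ V₆) :
    opp v ∈ (V₆).erase v := by
  simp only [octAntipode, mem_erase, mem_octVerts] at hv ⊢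
  grind [List.nodup_cons]

lemma octAntipode_octAntipode (h : [a, b, c, x, y, z].Nodup) (hv : v ∈ V₆) :
    opp (opp v) = v := by
  simp only [octAntipode, mem_octVerts] at hv ⊢
  grind [List.nodup_cons]

lemma adj_octFaces (h : [a, b, c, x, y, z].Nodup) {u : ℕ} :
    (facesGraph (octFaces a b c x y z)).Adj u v ↔
      u ∈ V₆ ∧ v ∈ V₆ ∧ u ≠ v ∧ v ≠ opp u := by
  simp only [facesGraph, octFaces, octAntipode, mem_octVerts, mem_insert, mem_singleton,
    exists_eq_or_imp, exists_eq_left]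
  grind [List.nodup_cons]

lemma rVerts_octFaces : rVerts (octFaces a b c x y z) = V₆ := by
  ext v
  simp only [mem_rVerts, octFaces, mem_octVerts, mem_insert, mem_singleton, exists_eq_or_imp,
    exists_eq_left]
  grind

lemma rNbr_octFaces (h : [a, b, c, x, y, z].Nodup) (hv : v ∈ V₆) :
    rNbr (octFaces a b c x y z) v = ((V₆).erase v).erase (opp v) := by
  ext w
  rw [mem_rNbr, adj_octFaces h, mem_erase, mem_erase]
  tauto

lemma rVerts_insertOctahedron_subset : rVerts F₊ ⊆ rVerts F ∪ V₆ :=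
  rVerts_octFaces (x := x) ▸ rVerts_erase_union_subset

namespace CanInsertOctahedron

lemma rNbr_insertOctahedron (hF : CanInsertOctahedron F a b c x y z) :
    rNbr F₊ v = rNbr F v ∪ rNbr (octFaces a b c x y z) v := by
  refine rNbr_erase_union hF.face_mem fun u hu w hw huw => (adj_octFaces hF.nodup).mpr ?_
  have := hF.nodup
  simp only [octAntipode, mem_octVerts, mem_insert, mem_singleton] at hu hw ⊢
  grind [List.nodup_cons]

lemma adj_insertOctahedron (hF : CanInsertOctahedron F a b c x y z) {u : ℕ} :
    (facesGraph F₊).Adj u v ↔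
      (facesGraph F).Adj u v ∨ (facesGraph (octFaces a b c x y z)).Adj u v := by
  rw [← mem_rNbr, hF.rNbr_insertOctahedron, mem_union, mem_rNbr, mem_rNbr]

lemma rNbr_insertOctahedron_of_notMem (hF : CanInsertOctahedron F a b c x y z) (hv : v ∉ V₆) :
    rNbr F₊ v = rNbr F v := by
  rw [hF.rNbr_insertOctahedron,
    rNbr_eq_empty_of_notMem (F := octFaces a b c x y z) (by rwa [rVerts_octFaces]), union_empty]

lemma rNbr_insertOctahedron_of_mem_new (hF : CanInsertOctahedron F a b c x y z)
    (hv : v ∈ ({x, y, z} : Finset ℕ)) : rNbr F₊ v = ((V₆).erase v).erase (opp v) := by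
  rw [hF.rNbr_insertOctahedron, rNbr_eq_empty_of_notMem (disjoint_left.mp hF.disjoint hv),
    empty_union,
    rNbr_octFaces hF.nodup (mem_octVerts_iff_or.mpr (.inr hv))]

lemma rNbr_insertOctahedron_of_mem_face (hF : CanInsertOctahedron F a b c x y z)
    (hv : v ∈ ({a, b, c} : Finset ℕ)) :
    rNbr F₊ v = rNbr F v ∪ ({x, y, z} : Finset ℕ).erase (opp v) := by
  have hface : ∀ w ∈ ({a, b, c} : Finset ℕ), w ≠ v → w ∈ rNbr F v := fun w hw hwv =>
    mem_rNbr.mpr ⟨hwv.symm, _, hF.face_mem, hv, hw⟩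
  have := hF.nodup
  ext w
  rw [hF.rNbr_insertOctahedron, mem_union, mem_union,
    rNbr_octFaces hF.nodup (mem_octVerts_iff_or.mpr (.inl hv))]
  simp only [octAntipode, mem_octVerts, mem_erase, mem_insert, mem_singleton] at hv hface ⊢
  grind [List.nodup_cons]

lemma rDeg_insertOctahedron_of_mem_new (hF : CanInsertOctahedron F a b c x y z)
    (hv : v ∈ ({x, y, z} : Finset ℕ)) : rDeg F₊ v = 4 := by
  have hv' : v ∈ V₆ := mem_octVerts_iff_or.mpr (.inr hv)
  rw [rDeg, hF.rNbr_insertOctahedron_of_mem_new hv,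
    card_erase_of_mem (octAntipode_mem_erase hF.nodup hv'), card_erase_of_mem hv',
    card_octVerts hF.nodup]

lemma rDeg_insertOctahedron_of_mem_face (hF : CanInsertOctahedron F a b c x y z)
    (hv : v ∈ ({a, b, c} : Finset ℕ)) : rDeg F₊ v = rDeg F v + 2 := by
  have hcard : ({x, y, z} : Finset ℕ).card = 3 := by
    have := hF.nodup
    grind [List.nodup_cons]
  rw [rDeg, hF.rNbr_insertOctahedron_of_mem_face hv, card_union_of_disjoint,
    card_erase_of_mem (octAntipode_mem_of_mem_face hv), hcard, rDeg]
  exact disjoint_of_subset_right (erase_subset _ _)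
    (disjoint_of_subset_left rNbr_subset_rVerts hF.disjoint.symm)

lemma rNbr_insertOctahedron_subset (hF : CanInsertOctahedron F a b c x y z) (hv : v ∈ V₆)
    (h4 : rDeg F₊ v = 4) : rNbr F₊ v ⊆ V₆ := by
  rcases mem_octVerts_iff_or.mp hv with hvT | hvX
  · rw [hF.rDeg_insertOctahedron_of_mem_face hvT] at h4
    have hcard : ({a, b, c} : Finset ℕ).card = 3 := by
      have := hF.nodup
      grind [List.nodup_cons]
    have hN : ({a, b, c} : Finset ℕ).erase v = rNbr F v :=
      eq_of_subset_of_card_le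
        (fun w hw => mem_rNbr.mpr ⟨(ne_of_mem_erase hw).symm, _, hF.face_mem, hvT,
          mem_of_mem_erase hw⟩)
        (by rw [card_erase_of_mem hvT, hcard, ← rDeg]; omega)
    rw [hF.rNbr_insertOctahedron_of_mem_face hvT, ← hN]
    intro w hw
    simp only [mem_union, mem_erase, mem_insert, mem_singleton, mem_octVerts] at hw ⊢
    tauto
  · rw [hF.rNbr_insertOctahedron_of_mem_new hvX]
    exact (erase_subset _ _).trans (erase_subset _ _)

lemma notMem_new_of_mem_closedNbr (hF : CanInsertOctahedron F a b c x y z)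
    (hv : v ∉ ({x, y, z} : Finset ℕ)) {w : ℕ} (hw : w ∈ insert v (rNbr F v)) :
    w ∉ ({x, y, z} : Finset ℕ) := by
  rcases mem_insert.mp hw with rfl | hw
  exacts [hv, disjoint_right.mp hF.disjoint (rNbr_subset_rVerts hw)]

end CanInsertOctahedron

end Octahedron

structure IsOctahedronRecoloring (F : Finset (Finset ℕ)) (a b c x y z : ℕ)
    (col col₂ : ℕ → Fin 6) : Prop where
  eq_of_notMem : ∀ w ∉ ({x, y, z} : Finset ℕ), col₂ w = col w
  image_octVerts : (octVerts a b c x y z).image col₂ = univ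
  mem_closedNbrColors : ∀ v ∈ ({a, b, c} : Finset ℕ), rDeg F v = 4 →
    col₂ (octAntipode a b c x y z v) ∈ closedNbrColors F col v

lemma IsGoodColoring.exists_colors_avoiding {F : Finset (Finset ℕ)} {a b c x y z : ℕ}
    {col : ℕ → Fin 6} (hg : IsGoodColoring F col) (hF : CanInsertOctahedron F a b c x y z) :
    ∃ p q r, {p, q, r} = ({col a, col b, col c} : Finset (Fin 6))ᶜ ∧
      (rDeg F a = 4 → p ∈ closedNbrColors F col a) ∧
      (rDeg F b = 4 → q ∈ closedNbrColors F col b) ∧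
      (rDeg F c = 4 → r ∈ closedNbrColors F col c) := by
  have hface : ∀ u ∈ ({a, b, c} : Finset ℕ), u ∈ rVerts F := fun u hu =>
    mem_rVerts.mpr ⟨_, hF.face_mem, hu⟩
  have hadj : ∀ u ∈ ({a, b, c} : Finset ℕ), ∀ v ∈ ({a, b, c} : Finset ℕ), u ≠ v →
      (facesGraph F).Adj u v := fun u hu v hv huv => ⟨huv, _, hF.face_mem, hu, hv⟩
  obtain ⟨hab, hac, hbc⟩ : a ≠ b ∧ a ≠ c ∧ b ≠ c := by
    have := hF.nodup
    grind [List.nodup_cons]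
  let M : ℕ → Finset (Fin 6) := fun v =>
    if rDeg F v = 4 then (closedNbrColors F col v)ᶜ else ∅
  have hM : ∀ v ∈ ({a, b, c} : Finset ℕ), (M v).card ≤ 1 := fun v hv => by
    simp only [M]
    split_ifs with h4
    exacts [hg.card_compl_closedNbrColors_le_one (hface v hv) h4, by simp]
  have hMdisj : ∀ u ∈ ({a, b, c} : Finset ℕ), ∀ v ∈ ({a, b, c} : Finset ℕ), u ≠ v →
      Disjoint (M u) (M v) := fun u hu v hv huv => by
    simp only [M]
    split_ifs with hu4 hv4
    exacts [hg.disjoint_compl_closedNbrColors (hadj u hu v hv huv) hu4 hv4,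
      disjoint_empty_right _, disjoint_empty_left _, disjoint_empty_left _]
  have hfree : ({col a, col b, col c} : Finset (Fin 6))ᶜ.card = 3 := by
    have := hg.proper a b (hadj a (by simp) b (by simp) hab)
    have := hg.proper a c (hadj a (by simp) c (by simp) hac)
    have := hg.proper b c (hadj b (by simp) c (by simp) hbc)
    rw [card_compl, Fintype.card_fin]
    grind
  obtain ⟨p, q, r, hpqr, hp, hq, hr⟩ := exists_eq_triple_avoiding hfree
    (hMdisj a (by simp) b (by simp) hab) (hMdisj a (by simp) c (by simp) hac)
    (hMdisj b (by simp) c (by simp) hbc) (hM a (by simp)) (hM b (by simp)) (hM c (by simp))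
  exact ⟨p, q, r, hpqr, fun h4 => by simpa [M, h4] using hp,
    fun h4 => by simpa [M, h4] using hq, fun h4 => by simpa [M, h4] using hr⟩

lemma IsGoodColoring.exists_isOctahedronRecoloring {F : Finset (Finset ℕ)} {a b c x y z : ℕ}
    {col : ℕ → Fin 6} (hg : IsGoodColoring F col) (hF : CanInsertOctahedron F a b c x y z) :
    ∃ col₂, IsOctahedronRecoloring F a b c x y z col col₂ := by
  obtain ⟨p, q, r, hpqr, hp, hq, hr⟩ := hg.exists_colors_avoiding hF
  have h := hF.nodup
  simp only [List.nodup_cons, List.mem_cons, List.not_mem_nil, or_false, List.nodup_nil,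
    and_true, not_or] at h
  obtain ⟨⟨hab, hac, hax, hay, haz⟩, ⟨hbc, hbx, hby, hbz⟩, ⟨hcx, hcy, hcz⟩, ⟨hxy, hxz⟩, hyz,
    -⟩ := h
  refine ⟨fun n => if n = x then p else if n = y then q else if n = z then r else col n,
    ⟨fun w hw => ?_, ?_, fun v hv h4 => ?_⟩⟩
  · simp only [mem_insert, mem_singleton, not_or] at hw
    simp [hw]
  · refine eq_univ_of_forall fun i => ?_
    have hfree := congrArg (i ∈ ·) hpqr
    simp only [mem_insert, mem_singleton, mem_compl, eq_iff_iff] at hfree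
    simp only [octVerts, image_insert, image_singleton, mem_insert, mem_singleton, hax, hay, haz,
      hbx, hby, hbz, hcx, hcy, hcz, Ne.symm hxy, Ne.symm hxz, Ne.symm hyz, ↓reduceIte]
    by_cases hi : i = col a ∨ i = col b ∨ i = col c
    · rcases hi with hi | hi | hi <;> simp [hi]
    · exact Or.inr (Or.inr (Or.inr (hfree.mpr hi)))
  · simp only [mem_insert, mem_singleton] at hv
    rcases hv with rfl | rfl | rfl
    · simpa [octAntipode] using hp h4
    · simpa [octAntipode, Ne.symm hab, Ne.symm hxy] using hq h4
    · simpa [octAntipode, Ne.symm hac, Ne.symm hbc, Ne.symm hxz, Ne.symm hyz] using hr h4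

namespace IsOctahedronRecoloring

variable {F : Finset (Finset ℕ)} {a b c x y z v : ℕ} {col col₂ : ℕ → Fin 6}

local notation "V₆" => octVerts a b c x y z
local notation "opp" => octAntipode a b c x y z
local notation "F₊" => insertOctahedron F a b c x y z

lemma injOn_octVerts (hr : IsOctahedronRecoloring F a b c x y z col col₂)
    (h : [a, b, c, x, y, z].Nodup) : Set.InjOn col₂ V₆ :=
  card_image_iff.mp (by rw [hr.image_octVerts, card_univ, Fintype.card_fin, card_octVerts h])

lemma closedNbrColors_insertOctahedron_of_notMem
    (hr : IsOctahedronRecoloring F a b c x y z col col₂)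
    (hF : CanInsertOctahedron F a b c x y z) (hv : v ∉ V₆) :
    closedNbrColors F₊ col₂ v = closedNbrColors F col v :=
  closedNbrColors_congr (hF.rNbr_insertOctahedron_of_notMem hv) fun _ hw =>
    hr.eq_of_notMem _ (hF.notMem_new_of_mem_closedNbr
      (fun hvX => hv (mem_octVerts_iff_or.mpr (.inr hvX))) hw)

lemma erase_subset_closedNbrColors_insertOctahedron
    (hr : IsOctahedronRecoloring F a b c x y z col col₂)
    (hF : CanInsertOctahedron F a b c x y z) (hv : v ∈ V₆) :
    univ.erase (col₂ (opp v)) ⊆ closedNbrColors F₊ col₂ v := by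
  refine erase_subset_closedNbrColors hr.image_octVerts fun w hw => ?_
  rw [hF.rNbr_insertOctahedron, rNbr_octFaces hF.nodup hv, mem_insert, mem_union, mem_erase,
    mem_erase]
  rw [mem_erase] at hw
  tauto

lemma mem_closedNbrColors_insertOctahedron (hr : IsOctahedronRecoloring F a b c x y z col col₂)
    (hg : IsGoodColoring F col) (hF : CanInsertOctahedron F a b c x y z) (hv : v ∈ V₆)
    (h5 : 5 ≤ rDeg F₊ v) : col₂ (opp v) ∈ closedNbrColors F₊ col₂ v := by
  rcases mem_octVerts_iff_or.mp hv with hvT | hvX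
  swap
  · rw [hF.rDeg_insertOctahedron_of_mem_new hvX] at h5
    omega
  have hvF : v ∈ rVerts F := mem_rVerts.mpr ⟨_, hF.face_mem, hvT⟩
  have hsub : closedNbrColors F col v ⊆ closedNbrColors F₊ col₂ v :=
    closedNbrColors_subset (hF.rNbr_insertOctahedron ▸ subset_union_left) fun _ hw =>
      hr.eq_of_notMem _ (hF.notMem_new_of_mem_closedNbr (disjoint_right.mp hF.disjoint hvF) hw)
  rw [hF.rDeg_insertOctahedron_of_mem_face hvT] at h5
  obtain ⟨k, hk⟩ := hg.even_rDeg v hvF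
  obtain h4 | h5 : rDeg F v = 4 ∨ 5 ≤ rDeg F v := by omega
  · exact hsub (hr.mem_closedNbrColors v hvT h4)
  · exact hsub (hg.closedNbrColors_eq_univ hvF h5 ▸ mem_univ _)

lemma card_closedNbrColors_insertOctahedron (hr : IsOctahedronRecoloring F a b c x y z col col₂)
    (hg : IsGoodColoring F col) (hF : CanInsertOctahedron F a b c x y z) (hv : v ∈ V₆) :
    min 6 (rDeg F₊ v + 1) ≤ (closedNbrColors F₊ col₂ v).card := by
  have hcover := hr.erase_subset_closedNbrColors_insertOctahedron hF hv
  by_cases h5 : 5 ≤ rDeg F₊ v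
  · rw [eq_univ_of_erase_subset hcover (hr.mem_closedNbrColors_insertOctahedron hg hF hv h5)]
    simp
  · have := card_le_card hcover
    rw [card_erase_of_mem (mem_univ _), card_univ, Fintype.card_fin] at this
    omega

lemma closedNbrColors_insertOctahedron_of_rDeg_eq_four
    (hr : IsOctahedronRecoloring F a b c x y z col col₂)
    (hF : CanInsertOctahedron F a b c x y z) (hv : v ∈ V₆) (h4 : rDeg F₊ v = 4) :
    closedNbrColors F₊ col₂ v = univ.erase (col₂ (opp v)) := by
  refine eq_erase_of_erase_subset (hr.erase_subset_closedNbrColors_insertOctahedron hF hv) ?_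
  have := card_closedNbrColors_le (F := F₊) (col := col₂) (v := v)
  simp only [Fintype.card_fin]
  omega

lemma closedNbrColors_insertOctahedron_ne (hr : IsOctahedronRecoloring F a b c x y z col col₂)
    (hF : CanInsertOctahedron F a b c x y z) {u : ℕ} (hu : u ∈ V₆) (hu4 : rDeg F₊ u = 4)
    (hv4 : rDeg F₊ v = 4) (huv : (facesGraph F₊).Adj u v) :
    closedNbrColors F₊ col₂ u ≠ closedNbrColors F₊ col₂ v := by
  intro he
  have hv : v ∈ V₆ := hF.rNbr_insertOctahedron_subset hu hu4 (mem_rNbr.mpr huv)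
  rw [hr.closedNbrColors_insertOctahedron_of_rDeg_eq_four hF hu hu4,
    hr.closedNbrColors_insertOctahedron_of_rDeg_eq_four hF hv hv4,
    erase_inj _ (mem_univ _)] at he
  have hopp := hr.injOn_octVerts hF.nodup (mem_of_mem_erase (octAntipode_mem_erase hF.nodup hu))
    (mem_of_mem_erase (octAntipode_mem_erase hF.nodup hv)) he
  exact huv.ne (by rw [← octAntipode_octAntipode hF.nodup hu, hopp,
    octAntipode_octAntipode hF.nodup hv])

lemma even_rDeg_insertOctahedron (hg : IsGoodColoring F col)
    (hF : CanInsertOctahedron F a b c x y z) (hv : v ∈ V₆) : Even (rDeg F₊ v) := by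
  rcases mem_octVerts_iff_or.mp hv with hvT | hvX
  · rw [hF.rDeg_insertOctahedron_of_mem_face hvT]
    exact (hg.even_rDeg v (mem_rVerts.mpr ⟨_, hF.face_mem, hvT⟩)).add even_two
  · rw [hF.rDeg_insertOctahedron_of_mem_new hvX]
    exact ⟨2, rfl⟩

lemma isGoodColoring (hr : IsOctahedronRecoloring F a b c x y z col col₂)
    (hg : IsGoodColoring F col) (hF : CanInsertOctahedron F a b c x y z) :
    IsGoodColoring F₊ col₂ := by
  have hold : ∀ v ∉ V₆, rDeg F₊ v = rDeg F v ∧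
      closedNbrColors F₊ col₂ v = closedNbrColors F col v := fun v hv =>
    ⟨by rw [rDeg, rDeg, hF.rNbr_insertOctahedron_of_notMem hv],
      hr.closedNbrColors_insertOctahedron_of_notMem hF hv⟩
  have holdV : ∀ v ∈ rVerts F₊, v ∉ V₆ → v ∈ rVerts F := fun v hv hv6 =>
    (mem_union.mp (rVerts_insertOctahedron_subset hv)).resolve_right hv6
  refine ⟨fun u v huv => ?_, fun v hv => ?_, fun v hv => ?_, fun u v hu4 hv4 huv => ?_⟩
  · rcases hF.adj_insertOctahedron.mp huv with huv | huv
    · obtain ⟨-, t, ht, hut, hvt⟩ := id huv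
      have hcol : ∀ w ∈ t, col₂ w = col w := fun w hw =>
        hr.eq_of_notMem w (disjoint_right.mp hF.disjoint (mem_rVerts.mpr ⟨t, ht, hw⟩))
      rw [hcol u hut, hcol v hvt]
      exact hg.proper u v huv
    · obtain ⟨hu, hv, huv, -⟩ := (adj_octFaces hF.nodup).mp huv
      exact fun he => huv (hr.injOn_octVerts hF.nodup hu hv he)
  · by_cases hv6 : v ∈ V₆
    · exact even_rDeg_insertOctahedron hg hF hv6
    · exact (hold v hv6).1 ▸ hg.even_rDeg v (holdV v hv hv6)
  · by_cases hv6 : v ∈ V₆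
    · exact hr.card_closedNbrColors_insertOctahedron hg hF hv6
    · rw [(hold v hv6).1, (hold v hv6).2]
      exact hg.card_closedNbrColors v (holdV v hv hv6)
  · by_cases hu : u ∈ V₆
    · exact hr.closedNbrColors_insertOctahedron_ne hF hu hu4 hv4 huv
    by_cases hv : v ∈ V₆
    · exact (hr.closedNbrColors_insertOctahedron_ne hF hv hv4 hu4 huv.symm).symm
    have hadj : (facesGraph F).Adj u v := by
      rcases hF.adj_insertOctahedron.mp huv with huv | huv
      exacts [huv, absurd ((adj_octFaces hF.nodup).mp huv).1 hu]
    rw [(hold u hu).1] at hu4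
    rw [(hold v hv).1] at hv4
    rw [(hold u hu).2, (hold v hv).2]
    exact hg.closedNbrColors_ne u v hu4 hv4 hadj

end IsOctahedronRecoloring

lemma RecEulerian.exists_isGoodColoring {F : Finset (Finset ℕ)} (hF : RecEulerian F) :
    ∃ col, IsGoodColoring F col := by
  induction hF with
  | base a b c hab hac hbc => exact ⟨_, isGoodColoring_triangle hab hac hbc⟩
  | step F a b c x y z _ hface h hx hy hz ih =>
    obtain ⟨col, hg⟩ := ih
    have hF : CanInsertOctahedron F a b c x y z := ⟨hface, h, by simp [hx, hy, hz]⟩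
    obtain ⟨col₂, hr⟩ := hg.exists_isOctahedronRecoloring hF
    exact ⟨col₂, hr.isGoodColoring hg hF⟩

/-- Every recursive Eulerian triangulation admits a 5-dynamic proper
6-coloring in which any two adjacent degree-4 vertices have distinct sets of missing colors
(colors not appearing on their closed neighborhoods).  In particular `χ₅(G) ≤ 6`. -/
theorem stmt18 (faces : Finset (Finset ℕ)) (h : RecEulerian faces) :
    ∃ c : ℕ → Fin 6,
      (∀ u v : ℕ, (facesGraph faces).Adj u v → c u ≠ c v) ∧
      (∀ v ∈ rVerts faces, min 5 (rDeg faces v) ≤ ((rNbr faces v).image c).card) ∧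
      (∀ u v : ℕ, rDeg faces u = 4 → rDeg faces v = 4 → (facesGraph faces).Adj u v →
        (Finset.univ.filter fun i : Fin 6 => c u ≠ i ∧ ∀ w ∈ rNbr faces u, c w ≠ i) ≠
        (Finset.univ.filter fun i : Fin 6 => c v ≠ i ∧ ∀ w ∈ rNbr faces v, c w ≠ i)) := by
  obtain ⟨col, hg⟩ := h.exists_isGoodColoring
  refine ⟨col, hg.proper, fun v hv => ?_, fun u v hu hv huv => ?_⟩
  · have hclosed := hg.card_closedNbrColors v hv
    have hnbr : (closedNbrColors faces col v).card ≤ ((rNbr faces v).image col).card + 1 := by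
      rw [closedNbrColors, image_insert]
      exact card_insert_le _ _
    omega
  · rw [filter_notMem_closedNbrColors, filter_notMem_closedNbrColors]
    exact compl_injective.ne (hg.closedNbrColors_ne u v hu hv huv)
end
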